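/- Let P be a near-Eulerian poset. Then the ab-index of P decomposes as Ψ_P = ℓ^Ψ_P + Ψ_{∂P}·a, where ℓ^Ψ_P := Ψ_{Σ̃P} − Ψ_{∂P}·(a+b). Moreover ℓ^Ψ_P lies in the subalgebra K⟨c,d⟩ of K⟨a,b⟩ generated by c = a+b and d = ab+ba, and as an element of K⟨c,d⟩ it equals Φ_{Σ̃P} − Φ_{∂P}·c. -/

import Mathlib

open scoped Classical

noncomputable section

namespace CDIndex

variable {α β : Type}

/-- The natural rank function of a graded poset: `rho x` is one less than the largest
cardinality of a chain contained in `Set.Iic x` (i.e. the length of a maximal chain of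
the interval `[0̂, x]`). -/
def rho [PartialOrder α] (x : α) : ℕ :=
  sSup {k : ℕ | ∃ s : Finset α,
    IsChain (· ≤ ·) (s : Set α) ∧ (s : Set α) ⊆ Set.Iic x ∧ s.card = k + 1}

/-- A subset `S` of a poset is graded of rank `n` if every maximal chain of `S`
has exactly `n + 1` elements (i.e. length `n`). -/
def IsGradedSetOfRank [PartialOrder α] (S : Set α) (n : ℕ) : Prop :=
  ∀ s : Finset α, (s : Set α) ⊆ S → IsChain (· ≤ ·) (s : Set α) →
    (∀ t : Finset α, (t : Set α) ⊆ S → IsChain (· ≤ ·) (t : Set α) → s ⊆ t → s = t) →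
    s.card = n + 1

/-- A poset is graded of rank `n` if every maximal chain has length `n`. -/
def IsGradedOfRank (α : Type) [PartialOrder α] (n : ℕ) : Prop :=
  IsGradedSetOfRank (Set.univ : Set α) n

/-- Every interval `[s, t]` with `s < t`, `s, t ∈ S`, has equally many elements of even
rank and of odd rank. -/
def BalancedIntervalsIn [PartialOrder α] (S : Set α) : Prop :=
  ∀ s ∈ S, ∀ t ∈ S, s < t →
    {y ∈ Set.Icc s t | Even (rho y)}.ncard = {y ∈ Set.Icc s t | Odd (rho y)}.ncard

/-- An Eulerian poset of rank `n`: a graded poset with `0̂` and `1̂` in which every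
interval of positive length has equally many elements of each parity of rank. -/
def IsEulerianOfRank (α : Type) [PartialOrder α] (n : ℕ) : Prop :=
  (∃ b : α, ∀ z, b ≤ z) ∧ (∃ t : α, ∀ z, z ≤ t) ∧
    IsGradedOfRank α n ∧ BalancedIntervalsIn (Set.univ : Set α)

/-- A lower Eulerian poset of rank `n`: a graded poset with `0̂` all of whose intervals
are Eulerian. -/
def IsLowerEulerianOfRank (α : Type) [PartialOrder α] (n : ℕ) : Prop :=
  (∃ b : α, ∀ z, b ≤ z) ∧ IsGradedOfRank α n ∧ BalancedIntervalsIn (Set.univ : Set α)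

/-- A lower order ideal `S` (of a poset) which is lower Eulerian of rank `n`. -/
def IsLowerEulerianSetOfRank [PartialOrder α] (S : Set α) (n : ℕ) : Prop :=
  IsGradedSetOfRank S n ∧ BalancedIntervalsIn S

/-- The boundary of (a lower order ideal `S` of) a graded poset of rank `n`: the lower
order ideal generated by the rank `n - 1` elements which are covered by exactly one
element. -/
def boundaryIn [PartialOrder α] (S : Set α) (n : ℕ) : Set α :=
  {y | y ∈ S ∧ ∃ x ∈ S, rho x = n - 1 ∧ {z ∈ S | x ⋖ z}.ncard = 1 ∧ y ≤ x}

/-- The boundary `∂P` of a graded poset of rank `n`. -/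
def boundary (α : Type) [PartialOrder α] (n : ℕ) : Set α :=
  boundaryIn (Set.univ : Set α) n

/-- `α` is a near-Eulerian poset of rank `n`: it is obtained from an Eulerian poset `Q`
of rank `n + 1` by removing the maximal element and one element `q` of rank `n`. -/
def IsNearEulerianOfRank (α : Type) [PartialOrder α] [Finite α] (n : ℕ) : Prop :=
  ∃ (Q : Type) (_ : PartialOrder Q) (_ : Finite Q) (q top : Q),
    IsEulerianOfRank Q (n + 1) ∧ (∀ z, z ≤ top) ∧ rho q = n ∧ q ≠ top ∧
    Nonempty (α ≃o {x : Q // x ≠ q ∧ x ≠ top})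

/-- `α` is (isomorphic to) the boundary of an Eulerian poset, where `α` has rank `n`
(so the Eulerian poset has rank `n + 1`). -/
def IsBoundaryOfEulerianOfRank (α : Type) [PartialOrder α] [Finite α] (n : ℕ) : Prop :=
  ∃ (Q : Type) (_ : PartialOrder Q) (_ : Finite Q) (top : Q),
    IsEulerianOfRank Q (n + 1) ∧ (∀ z, z ≤ top) ∧
    Nonempty (α ≃o {x : Q // x ≠ top})

/-! ### The semisuspension -/

/-- The semisuspension of `α` relative to a set `S` (intended: `S = ∂α`): the poset `α`
together with one new element `q` lying above `0̂` and above every element of `S`. -/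
@[ext] structure Semisusp (α : Type) (S : Set α) : Type where
  toOpt : Option α

namespace Semisusp

variable {S : Set α}

/-- The new vertex `q` of the semisuspension. -/
def q : Semisusp α S := ⟨none⟩

/-- The inclusion of `α` into its semisuspension. -/
def incl (a : α) : Semisusp α S := ⟨some a⟩

instance instPartialOrder [PartialOrder α] [OrderBot α] : PartialOrder (Semisusp α S) where
  le x y := match x, y with
    | ⟨some a⟩, ⟨some b⟩ => a ≤ b
    | ⟨some a⟩, ⟨none⟩ => a = ⊥ ∨ ∃ s ∈ S, a ≤ s
    | ⟨none⟩, ⟨some _⟩ => False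
    | ⟨none⟩, ⟨none⟩ => True
  le_refl x := by rcases x with ⟨_ | a⟩ <;> simp
  le_trans x y z hxy hyz := by
    rcases x with ⟨_ | a⟩ <;> rcases y with ⟨_ | b⟩ <;> rcases z with ⟨_ | c⟩ <;>
      simp_all
    · rcases hyz with h | ⟨s, hs, hbs⟩
      · subst h
        exact Or.inl (le_bot_iff.mp hxy)
      · exact Or.inr ⟨s, hs, le_trans hxy hbs⟩
    · exact le_trans hxy hyz
  le_antisymm x y hxy hyx := by
    rcases x with ⟨_ | a⟩ <;> rcases y with ⟨_ | b⟩ <;> simp_all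
    exact le_antisymm hxy hyx

instance [PartialOrder α] [OrderBot α] : OrderBot (Semisusp α S) where
  bot := ⟨some ⊥⟩
  bot_le x := by
    rcases x with ⟨_ | a⟩
    · exact Or.inl rfl
    · show (⊥ : α) ≤ a
      exact bot_le

def equivOption : Semisusp α S ≃ Option α where
  toFun := toOpt
  invFun := mk
  left_inv _ := rfl
  right_inv _ := rfl

instance [Finite α] : Finite (Semisusp α S) := by
  have := Fintype.ofFinite α
  exact Finite.of_equiv (Option α) (equivOption (S := S)).symm

end Semisusp

/-! ### The flag enumerator, the `ab`-index and the `cd`-index -/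

variable (K : Type) [Field K] [CharZero K]

/-- The free noncommutative algebra `K⟨a, b⟩`. -/
abbrev FA := FreeAlgebra K (Fin 2)

/-- The letter `a`. -/
def la : FA K := FreeAlgebra.ι K 0

/-- The letter `b`. -/
def lb : FA K := FreeAlgebra.ι K 1

/-- `c = a + b`. -/
def lc : FA K := la K + lb K

/-- `d = ab + ba`. -/
def ld : FA K := la K * lb K + lb K * la K

/-- The characteristic monomial `u_S = u_1 ⋯ u_n` of a set `S` of ranks, where
`u_i = b` if `i ∈ S` and `u_i = a` otherwise. -/
def uWord (n : ℕ) (S : Set ℕ) : FA K :=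
  (List.ofFn fun i : Fin n => if (i : ℕ) + 1 ∈ S then lb K else la K).prod

/-- Chains of the subposet `S` which contain the element `b0` (intended: the minimal
element of `S`). -/
def chainsIn [PartialOrder α] (S : Set α) (b0 : α) : Set (Finset α) :=
  {C | (C : Set α) ⊆ S ∧ IsChain (· ≤ ·) (C : Set α) ∧ b0 ∈ C}

/-- The flag enumerator `Υ` of the subposet `S` with minimal element `b0`, of rank `n`;
ranks are computed relative to `b0`. -/
def upsSet [PartialOrder α] (S : Set α) (b0 : α) (n : ℕ) : FA K :=
  ∑ᶠ C ∈ chainsIn S b0, uWord K n ((fun y => rho y - rho b0) '' (C : Set α))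

/-- The substitution `a ↦ a - b`, `b ↦ b` turning the flag enumerator into the
`ab`-index. -/
def toAB : FA K →ₐ[K] FA K :=
  FreeAlgebra.lift K (fun i : Fin 2 => if i = 0 then la K - lb K else lb K)

/-- The `ab`-index `Ψ` of the subposet `S` with minimal element `b0`, of rank `n`:
`Ψ(a,b) = Υ(a-b, b)`. -/
def psiS [PartialOrder α] (S : Set α) (b0 : α) (n : ℕ) : FA K :=
  toAB K (upsSet K S b0 n)

/-- The subalgebra `K⟨c, d⟩ ⊆ K⟨a, b⟩` generated by `c = a + b` and `d = ab + ba`. -/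
def cdSub : Subalgebra K (FA K) := Algebra.adjoin K {lc K, ld K}

end CDIndex

/-!
Write `P = Q ∖ {q, 1̂}` with `Q` Eulerian of rank `n + 1`. By the diamond property of `Q`, an
element of rank `n - 1` of `P` has exactly one cover in `P` iff it lies below `q`, so `∂P` is
`[0̂, q)` and `Σ̃P` is `Q ∖ {1̂}`. A chain of `Q ∖ {1̂}` through `q` is a chain of `[0̂, q)` with
`q` on top, hence `Ψ_{Σ̃P} = Ψ_P + Ψ_{∂P}·b`, which is the decomposition.

Membership in `K⟨c,d⟩` is the Bayer–Klapper theorem for the lower intervals `[0̂, t)` of an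
Eulerian poset, proved by induction on `t`. Splitting chains by their top element gives
`Υ_t = a^m + Σ_z Υ_z b a^(m-ρz)` (with `m = ρt - 1`), and summing the Euler relations of the
intervals `[max C, t]` over all chains `C` gives `(-1)^m Υ_t = a^m + Σ_z (-1)^ρz Υ_z c a^(m-ρz)`.
After `a ↦ e = a - b`, adding the first relation to `(-1)^m` times the second gives
`2Ψ_t = (1 + (-1)^m) e^m + Σ_z Ψ_z (b + (-1)^k a) e^k` with `k = m - ρz`, and every term lies in
`K⟨c,d⟩` because `e² = c² - 2d`.
-/

namespace CDIndex

section Rank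

variable {γ : Type} [PartialOrder γ] [Finite γ]

theorem bddAbove_chain_card (x : γ) : BddAbove {k : ℕ | ∃ s : Finset γ,
    IsChain (· ≤ ·) (s : Set γ) ∧ (s : Set γ) ⊆ Set.Iic x ∧ s.card = k + 1} := by
  have := Fintype.ofFinite γ
  exact ⟨Fintype.card γ, fun k ⟨s, _, _, hs⟩ => by have := s.card_le_univ; omega⟩

theorem card_le_rho_add_one {x : γ} {s : Finset γ} (hs : IsChain (· ≤ ·) (s : Set γ))
    (hsx : (s : Set γ) ⊆ Set.Iic x) : s.card ≤ rho x + 1 := by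
  rcases s.eq_empty_or_nonempty with rfl | hne
  · simp
  have := le_csSup (bddAbove_chain_card x) ⟨s, hs, hsx, (Nat.sub_add_cancel hne.card_pos).symm⟩
  rw [rho]
  omega

theorem exists_chain_card_eq_rho (x : γ) : ∃ s : Finset γ, IsChain (· ≤ ·) (s : Set γ) ∧
    (s : Set γ) ⊆ Set.Iic x ∧ x ∈ s ∧ s.card = rho x + 1 := by
  obtain ⟨s, hs, hsx, hcard⟩ : rho x ∈ {k : ℕ | ∃ s : Finset γ,
      IsChain (· ≤ ·) (s : Set γ) ∧ (s : Set γ) ⊆ Set.Iic x ∧ s.card = k + 1} :=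
    Nat.sSup_mem ⟨0, {x}, by simp, by simp, rfl⟩ (bddAbove_chain_card x)
  refine ⟨s, hs, hsx, by_contra fun hx => ?_, hcard⟩
  have := card_le_rho_add_one (s := insert x s)
    (by simpa using hs.insert fun y hy _ => Or.inr (hsx hy))
    (by simpa using Set.insert_subset (Set.mem_Iic.2 le_rfl) hsx)
  rw [Finset.card_insert_of_notMem hx] at this
  omega

theorem rho_strictMono : StrictMono (rho : γ → ℕ) := by
  intro x y hxy
  obtain ⟨s, hs, hsx, -, hcard⟩ := exists_chain_card_eq_rho x
  have hy : y ∉ s := fun hy => (hsx hy).not_gt hxy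
  have hsy : (s : Set γ) ⊆ Set.Iic y := fun z hz => (hsx hz).trans hxy.le
  have := card_le_rho_add_one (s := insert y s)
    (by simpa using hs.insert fun z hz _ => Or.inr (hsy hz))
    (by simpa using Set.insert_subset (Set.mem_Iic.2 le_rfl) hsy)
  rw [Finset.card_insert_of_notMem hy] at this
  omega

theorem rho_bot [OrderBot γ] : rho (⊥ : γ) = 0 := by
  obtain ⟨s, -, hs, -, hcard⟩ := exists_chain_card_eq_rho (⊥ : γ)
  have : s ⊆ {⊥} := fun y hy => Finset.mem_singleton.2 (le_bot_iff.1 (hs hy))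
  have := Finset.card_le_card this
  simp only [Finset.card_singleton] at this
  omega

end Rank

section Graded

variable {γ : Type} [PartialOrder γ] {N : ℕ}

theorem IsGradedOfRank.card_eq (hgr : IsGradedOfRank γ N) {M : Finset γ}
    (hM : IsMaxChain (· ≤ ·) (M : Set γ)) : M.card = N + 1 :=
  hgr M (Set.subset_univ _) hM.isChain fun _ _ ht hMt =>
    Finset.coe_injective (hM.2 ht (Finset.coe_subset.2 hMt))

theorem exists_isMaxChain_superset [Finite γ] {s : Finset γ} (hs : IsChain (· ≤ ·) (s : Set γ)) :
    ∃ M : Finset γ, s ⊆ M ∧ IsMaxChain (· ≤ ·) (M : Set γ) := by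
  obtain ⟨M, hM, hsM⟩ := hs.exists_maxChain
  exact ⟨(Set.toFinite M).toFinset, by simpa using hsM, by simpa using hM⟩

theorem isMaxChain_of_forall_insert {s : Set γ} (hs : IsChain (· ≤ ·) s)
    (h : ∀ w, IsChain (· ≤ ·) (insert w s) → w ∈ s) : IsMaxChain (· ≤ ·) s :=
  ⟨hs, fun _ ht hst => hst.antisymm fun w hw => h w (ht.mono (Set.insert_subset hw hst))⟩

theorem isMaxChain_union_filter [Finite γ] {D M : Finset γ} {x : γ}
    (hD : IsChain (· ≤ ·) (D : Set γ)) (hDx : (D : Set γ) ⊆ Set.Iic x) (hDcard : D.card = rho x + 1)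
    (hM : IsMaxChain (· ≤ ·) (M : Set γ)) (hx : x ∈ M) :
    IsMaxChain (· ≤ ·) ((D ∪ M.filter (x ≤ ·) : Finset γ) : Set γ) := by
  have hchain : IsChain (· ≤ ·) ((D ∪ M.filter (x ≤ ·) : Finset γ) : Set γ) := by
    simp only [Finset.coe_union, Finset.coe_filter]
    refine isChain_union.2 ⟨hD, hM.isChain.mono fun _ hy => hy.1, fun u hu v hv _ => ?_⟩
    exact Or.inl ((hDx hu).trans hv.2)
  refine isMaxChain_of_forall_insert hchain fun w hw => ?_
  have hxE : x ∈ (D ∪ M.filter (x ≤ ·) : Finset γ) := by simp [hx]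
  rcases hw.total (Set.mem_insert w _) (Set.mem_insert_of_mem w hxE) with hwx | hxw
  · by_contra hwD
    have hwD : w ∉ D := fun h => hwD (by simp [h])
    have := card_le_rho_add_one (s := insert w D)
      (by simpa using hw.mono (Set.insert_subset_insert (by simp)))
      (by simpa using Set.insert_subset (Set.mem_Iic.2 hwx) hDx)
    rw [Finset.card_insert_of_notMem hwD] at this
    omega
  · suffices w ∈ (M : Set γ) by simp_all
    refine (hM.2 (hM.isChain.insert fun y hy hne => ?_) (Set.subset_insert _ _)).symm ▸
      Set.mem_insert w _
    rcases hM.isChain.total hy hx with hyx | hxy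
    · exact Or.inr (hyx.trans hxw)
    · exact hw.total (Set.mem_insert w _)
        (Set.mem_insert_of_mem w (by simp [Finset.mem_coe.1 hy, hxy]))

theorem IsGradedOfRank.card_filter_le [Finite γ] (hgr : IsGradedOfRank γ N) {M : Finset γ}
    (hM : IsMaxChain (· ≤ ·) (M : Set γ)) {x : γ} (hx : x ∈ M) :
    (M.filter (· ≤ x)).card = rho x + 1 := by
  obtain ⟨D, hD, hDx, hxD, hDcard⟩ := exists_chain_card_eq_rho x
  -- `D ∪ M_{≥x}` and `M = M_{≤x} ∪ M_{≥x}` are both maximal chains, so they have equal size.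
  have hE := hgr.card_eq (isMaxChain_union_filter hD hDx hDcard hM hx)
  have hDM : D ∩ M.filter (x ≤ ·) = {x} := by
    ext y
    simp only [Finset.mem_inter, Finset.mem_filter, Finset.mem_singleton]
    exact ⟨fun h => le_antisymm (hDx h.1) h.2.2, by rintro rfl; exact ⟨hxD, hx, le_rfl⟩⟩
  have hMM : M.filter (· ≤ x) ∩ M.filter (x ≤ ·) = {x} := by
    ext y
    simp only [Finset.mem_inter, Finset.mem_filter, Finset.mem_singleton]
    exact ⟨fun h => le_antisymm h.1.2 h.2.2, by rintro rfl; exact ⟨⟨hx, le_rfl⟩, hx, le_rfl⟩⟩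
  have hMsplit : M.filter (· ≤ x) ∪ M.filter (x ≤ ·) = M := by
    ext y
    simp only [Finset.mem_union, Finset.mem_filter]
    refine ⟨fun h => h.elim (·.1) (·.1), fun hy => ?_⟩
    exact (hM.isChain.total hy hx).imp (⟨hy, ·⟩) (⟨hy, ·⟩)
  have h1 := Finset.card_union_add_card_inter D (M.filter (x ≤ ·))
  have h2 := Finset.card_union_add_card_inter (M.filter (· ≤ x)) (M.filter (x ≤ ·))
  rw [hDM, hE] at h1
  rw [hMM, hMsplit, hgr.card_eq hM] at h2
  simp only [Finset.card_singleton] at h1 h2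
  omega

theorem IsGradedOfRank.rho_of_covBy [Finite γ] (hgr : IsGradedOfRank γ N) {x y : γ} (hxy : x ⋖ y) :
    rho y = rho x + 1 := by
  obtain ⟨M, hxyM, hM⟩ := exists_isMaxChain_superset (s := {x, y})
    (by simpa using IsChain.pair hxy.le)
  have hx : x ∈ M := hxyM (by simp)
  have hy : y ∈ M := hxyM (by simp)
  have hfilter : M.filter (· ≤ y) = insert y (M.filter (· ≤ x)) := by
    ext z
    simp only [Finset.mem_filter, Finset.mem_insert]
    refine ⟨fun ⟨hz, hzy⟩ => ?_, ?_⟩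
    · refine hzy.eq_or_lt.imp id fun hzy => ⟨hz, ?_⟩
      rcases hM.isChain.total hz hx with hzx | hxz
      · exact hzx
      · obtain rfl | hxz := hxz.eq_or_lt
        exacts [le_rfl, (hxy.2 hxz hzy).elim]
    · rintro (rfl | ⟨hz, hzx⟩)
      exacts [⟨hy, le_rfl⟩, ⟨hz, hzx.trans hxy.le⟩]
  have := hgr.card_filter_le hM hy
  rw [hfilter, Finset.card_insert_of_notMem (by simp [hxy.lt.not_ge]),
    hgr.card_filter_le hM hx] at this
  omega

theorem IsGradedOfRank.rho_of_forall_le [Finite γ] (hgr : IsGradedOfRank γ N) {t : γ}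
    (ht : ∀ z, z ≤ t) : rho t = N := by
  obtain ⟨M, htM, hM⟩ := exists_isMaxChain_superset (s := {t}) (by simp)
  have := hgr.card_filter_le hM (htM (Finset.mem_singleton_self t))
  rw [Finset.filter_true_of_mem fun z _ => ht z, hgr.card_eq hM] at this
  omega

end Graded

section Words

variable {K : Type} [Field K]

theorem uWord_zero (S : Set ℕ) : uWord K 0 S = 1 := by
  simp [uWord]

theorem uWord_of_forall_le {S : Set ℕ} {k m : ℕ} (hS : ∀ i ∈ S, i ≤ k) (hkm : k ≤ m) :
    uWord K m S = uWord K k S * la K ^ (m - k) := by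
  obtain ⟨r, rfl⟩ := Nat.exists_eq_add_of_le hkm
  have hnot : ∀ i : Fin r, k + (i : ℕ) + 1 ∉ S := fun i hi => by have := hS _ hi; omega
  simp [uWord, List.ofFn_add, hnot, List.ofFn_const, List.prod_replicate]

theorem uWord_insert_of_lt {S : Set ℕ} {n j : ℕ} (hj : n < j) :
    uWord K n (insert j S) = uWord K n S := by
  have : ∀ i : Fin n, (i : ℕ) + 1 ≠ j := fun i => by omega
  simp [uWord, this]

theorem uWord_succ_of_mem {S : Set ℕ} {n : ℕ} (hn : n + 1 ∈ S) :
    uWord K (n + 1) S = uWord K n S * lb K := by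
  rw [uWord, List.ofFn_succ', List.prod_concat]
  simp [uWord, hn]

theorem uWord_insert_of_forall_le {S : Set ℕ} {k m : ℕ} (hS : ∀ i ∈ S, i ≤ k)
    (hkm : k + 1 ≤ m) :
    uWord K m (insert (k + 1) S) = uWord K k S * (lb K * la K ^ (m - (k + 1))) := by
  rw [uWord_of_forall_le (k := k + 1) (by simpa using fun i hi => (hS i hi).trans k.le_succ) hkm,
    uWord_succ_of_mem (Set.mem_insert _ _), uWord_insert_of_lt k.lt_succ_self, mul_assoc]

end Words

section CdSubalgebra

variable (K : Type) [Field K]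

theorem lc_mem_cdSub : lc K ∈ cdSub K := Algebra.subset_adjoin (by simp)

theorem ld_mem_cdSub : ld K ∈ cdSub K := Algebra.subset_adjoin (by simp)

theorem sub_pow_mem_cdSub_of_even {k : ℕ} (hk : Even k) : (la K - lb K) ^ k ∈ cdSub K := by
  obtain ⟨i, rfl⟩ := hk
  have hsq : (la K - lb K) ^ 2 = lc K * lc K - ld K - ld K := by
    simp only [lc, ld]
    noncomm_ring
  rw [← two_mul, pow_mul, hsq]
  exact pow_mem (sub_mem (sub_mem (mul_mem (lc_mem_cdSub K) (lc_mem_cdSub K))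
    (ld_mem_cdSub K)) (ld_mem_cdSub K)) i

theorem one_add_neg_one_pow_smul_mem_cdSub (m : ℕ) :
    ((1 : K) + (-1) ^ m) • (la K - lb K) ^ m ∈ cdSub K := by
  rcases Nat.even_or_odd m with hm | hm
  · exact Subalgebra.smul_mem _ (sub_pow_mem_cdSub_of_even K hm) _
  · simp [hm.neg_one_pow]

/-- With `e = a - b`: `(b + a) e^k = c e^k` for even `k` and `(b - a) e^k = -e^(k+1)` for odd
`k`. -/
theorem add_neg_one_pow_smul_mul_mem_cdSub (k : ℕ) :
    (lb K + (-1 : K) ^ k • la K) * (la K - lb K) ^ k ∈ cdSub K := by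
  rcases Nat.even_or_odd k with hk | hk
  · rw [hk.neg_one_pow, one_smul, add_comm, ← lc]
    exact mul_mem (lc_mem_cdSub K) (sub_pow_mem_cdSub_of_even K hk)
  · rw [hk.neg_one_pow, neg_one_smul, ← sub_eq_add_neg, ← neg_sub, neg_mul, ← pow_succ']
    exact neg_mem (sub_pow_mem_cdSub_of_even K hk.add_one)

end CdSubalgebra

section Chains

variable {γ : Type} [PartialOrder γ] [OrderBot γ] {C : Finset γ} {z t : γ}

theorem mem_chainsIn {S : Set γ} :
    C ∈ chainsIn S ⊥ ↔ (C : Set γ) ⊆ S ∧ IsChain (· ≤ ·) (C : Set γ) ∧ ⊥ ∈ C :=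
  Iff.rfl

theorem bot_lt_of_mem_chainsIn_Iio (hC : C ∈ chainsIn (Set.Iio z) ⊥) : ⊥ < z :=
  hC.1 hC.2.2

theorem notMem_of_mem_chainsIn_Iio (hC : C ∈ chainsIn (Set.Iio z) ⊥) : z ∉ C :=
  fun hz => lt_irrefl z (hC.1 hz)

theorem insert_mem_chainsIn_Iio (hC : C ∈ chainsIn (Set.Iio z) ⊥) (hzt : z < t) :
    insert z C ∈ chainsIn (Set.Iio t) ⊥ := by
  obtain ⟨hCz, hchain, hbot⟩ := hC
  refine ⟨?_, ?_, Finset.mem_insert_of_mem hbot⟩ <;> rw [Finset.coe_insert]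
  · exact Set.insert_subset hzt fun y hy => (hCz hy).trans hzt
  · exact hchain.insert fun y hy _ => Or.inr (hCz hy).le

theorem injOn_insert_chainsIn_Iio : Set.InjOn (insert z) (chainsIn (Set.Iio z) ⊥) :=
  fun C hC C' hC' h => by
    rw [← Finset.erase_insert (notMem_of_mem_chainsIn_Iio hC), h,
      Finset.erase_insert (notMem_of_mem_chainsIn_Iio hC')]

theorem erase_mem_chainsIn_Iio {S : Set γ} (hC : C ∈ chainsIn S ⊥) (hzb : z ≠ ⊥)
    (hmax : ∀ y ∈ C, y ≤ z) : C.erase z ∈ chainsIn (Set.Iio z) ⊥ := by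
  obtain ⟨-, hchain, hbot⟩ := hC
  refine ⟨fun y hy => ?_, hchain.mono (by simp), Finset.mem_erase.2 ⟨hzb.symm, hbot⟩⟩
  rw [Finset.coe_erase] at hy
  exact (hmax y hy.1).lt_of_ne hy.2

theorem exists_greatest_of_mem_chainsIn {S : Set γ} (hC : C ∈ chainsIn S ⊥) :
    ∃ z ∈ C, ∀ y ∈ C, y ≤ z := by
  obtain ⟨z, hz⟩ := C.exists_maximal ⟨⊥, hC.2.2⟩
  exact ⟨z, hz.1, fun y hy => (hC.2.1.total hy hz.1).elim id (hz.2 hy)⟩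

theorem eq_of_insert_eq_insert_of_mem_chainsIn {C' : Finset γ} {z' : γ}
    (hC : C ∈ chainsIn (Set.Iio z) ⊥) (hC' : C' ∈ chainsIn (Set.Iio z') ⊥)
    (h : insert z C = insert z' C') : z = z' := by
  have hz : z ∈ insert z' C' := h ▸ Finset.mem_insert_self z C
  have hz' : z' ∈ insert z C := h.symm ▸ Finset.mem_insert_self z' C'
  rcases Finset.mem_insert.1 hz with hzz | hzC'
  · exact hzz
  rcases Finset.mem_insert.1 hz' with hzz | hzC
  · exact hzz.symm
  exact ((hC'.1 hzC').trans (hC.1 hzC)).false.elim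

variable [Fintype γ]

/-- Every chain of `[⊥, t)` through `⊥` other than `{⊥}` is `C ∪ {z}` for its top element `z`
and a unique chain `C` of `[⊥, z)`. -/
theorem sum_chainsIn_Iio {M : Type*} [AddCommMonoid M] (f : Finset γ → M) (ht : ⊥ < t) :
    ∑ C ∈ (chainsIn (Set.Iio t) ⊥).toFinset, f C =
      f {⊥} + ∑ z ∈ (Set.Ioo ⊥ t).toFinset,
        ∑ C ∈ (chainsIn (Set.Iio z) ⊥).toFinset, f (insert z C) := by
  have hdecomp : (chainsIn (Set.Iio t) ⊥).toFinset = insert {⊥} ((Set.Ioo ⊥ t).toFinset.biUnion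
      fun z => (chainsIn (Set.Iio z) ⊥).toFinset.image (insert z)) := by
    ext C
    simp only [Set.mem_toFinset, Finset.mem_insert, Finset.mem_biUnion, Finset.mem_image,
      Set.mem_Ioo]
    constructor
    · intro hC
      obtain ⟨z, hz, hmax⟩ := exists_greatest_of_mem_chainsIn hC
      rcases eq_or_ne z ⊥ with rfl | hzb
      · exact Or.inl (Finset.eq_singleton_iff_unique_mem.2
          ⟨hC.2.2, fun y hy => le_bot_iff.1 (hmax y hy)⟩)
      · exact Or.inr ⟨z, ⟨bot_lt_iff_ne_bot.2 hzb, hC.1 hz⟩, C.erase z,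
          erase_mem_chainsIn_Iio hC hzb hmax, Finset.insert_erase hz⟩
    · rintro (rfl | ⟨z, ⟨-, hzt⟩, C, hC, rfl⟩)
      · exact ⟨by simpa using ht, by simp, by simp⟩
      · exact insert_mem_chainsIn_Iio hC hzt
  rw [hdecomp, Finset.sum_insert, Finset.sum_biUnion]
  · congr 1
    refine Finset.sum_congr rfl fun z _ => Finset.sum_image ?_
    simpa using injOn_insert_chainsIn_Iio
  · intro z _ z' _ hne
    refine Finset.disjoint_left.2 fun C hz hz' => hne ?_
    obtain ⟨C₁, hC₁, rfl⟩ := Finset.mem_image.1 hz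
    obtain ⟨C₂, hC₂, h⟩ := Finset.mem_image.1 hz'
    exact (eq_of_insert_eq_insert_of_mem_chainsIn (Set.mem_toFinset.1 hC₂)
      (Set.mem_toFinset.1 hC₁) h).symm
  · simp only [Finset.mem_biUnion, Finset.mem_image, not_exists, not_and]
    intro z hz C _ h
    exact (Set.mem_toFinset.1 hz).1.ne' (Finset.mem_singleton.1 (h ▸ Finset.mem_insert_self z C))

theorem sum_chainsIn_Iio_of_covBy {M : Type*} [AddCommMonoid M] (f : Finset γ → M) {q : γ}
    (hq : ⊥ < q) (hqt : q ⋖ t) :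
    ∑ C ∈ (chainsIn (Set.Iio t) ⊥).toFinset, f C =
      ∑ C ∈ (chainsIn (Set.Iio t \ {q}) ⊥).toFinset, f C +
        ∑ C ∈ (chainsIn (Set.Iio q) ⊥).toFinset, f (insert q C) := by
  rw [← Finset.sum_filter_not_add_sum_filter _ (q ∈ ·)]
  congr 1
  · congr 1
    ext C
    simp only [Finset.mem_filter, Set.mem_toFinset, mem_chainsIn, Set.subset_sdiff,
      Set.disjoint_singleton_right, Finset.mem_coe]
    tauto
  · have hinj : Set.InjOn (insert q) ((chainsIn (Set.Iio q) ⊥).toFinset : Set (Finset γ)) := by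
      simpa using injOn_insert_chainsIn_Iio
    rw [← Finset.sum_image hinj]
    congr 1
    ext C
    simp only [Finset.mem_filter, Set.mem_toFinset, Finset.mem_image]
    constructor
    · rintro ⟨hC, hqC⟩
      refine ⟨C.erase q, erase_mem_chainsIn_Iio hC hq.ne' fun y hy => ?_, Finset.insert_erase hqC⟩
      exact (hC.2.1.total hy hqC).elim id fun hqy =>
        (hqy.eq_or_lt.resolve_right fun hqy => hqt.2 hqy (hC.1 hy)).ge
    · rintro ⟨C, hC, rfl⟩
      exact ⟨insert_mem_chainsIn_Iio hC hqt.lt, Finset.mem_insert_self q C⟩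

theorem sum_chainsIn_Iio_smul_comm {R M : Type*} [Semiring R] [AddCommMonoid M] [Module R M]
    (w : γ → R) (f : Finset γ → M) (t : γ) :
    ∑ C ∈ (chainsIn (Set.Iio t) ⊥).toFinset,
        (∑ z ∈ (Set.Ioo ⊥ t).toFinset with ∀ y ∈ C, y < z, w z) • f C =
      ∑ z ∈ (Set.Ioo ⊥ t).toFinset, w z • ∑ C ∈ (chainsIn (Set.Iio z) ⊥).toFinset, f C := by
  simp_rw [Finset.sum_smul, Finset.smul_sum]
  refine Finset.sum_comm' fun C z => ?_
  simp only [Finset.mem_filter, Set.mem_toFinset, Set.mem_Ioo, mem_chainsIn]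
  exact ⟨fun ⟨⟨_, hch, hb⟩, ⟨hbz, hzt⟩, hC⟩ => ⟨⟨fun y hy => hC y hy, hch, hb⟩, hbz, hzt⟩,
    fun ⟨⟨hC, hch, hb⟩, hbz, hzt⟩ =>
      ⟨⟨fun y hy => (hC hy).trans hzt, hch, hb⟩, ⟨hbz, hzt⟩, fun y hy => hC hy⟩⟩

end Chains

section Euler

variable {γ : Type} [PartialOrder γ] [Fintype γ] {R : Type*} [CommRing R]

def eulerAbove [OrderBot γ] (R : Type*) [CommRing R] (t : γ) (C : Finset γ) : R :=
  ∑ z ∈ (Set.Ioo ⊥ t).toFinset with ∀ y ∈ C, y < z, (-1 : R) ^ rho z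

theorem sum_Icc_neg_one_pow (HB : BalancedIntervalsIn (Set.univ : Set γ)) {s t : γ}
    (hst : s < t) : ∑ z ∈ (Set.Icc s t).toFinset, (-1 : R) ^ rho z = 0 := by
  have hbal := HB s trivial t trivial hst
  simp only [Set.ncard_eq_toFinset_card'] at hbal
  rw [← Finset.sum_filter_add_sum_filter_not _ (fun z => Even (rho z)),
    Finset.sum_congr rfl fun z hz => (Finset.mem_filter.1 hz).2.neg_one_pow,
    Finset.sum_congr rfl fun z hz =>
      (Nat.not_even_iff_odd.1 (Finset.mem_filter.1 hz).2).neg_one_pow]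
  have hE : {y | y ∈ Set.Icc s t ∧ Even (rho y)}.toFinset =
      {z ∈ (Set.Icc s t).toFinset | Even (rho z)} := by ext; simp
  have hO : {y | y ∈ Set.Icc s t ∧ Odd (rho y)}.toFinset =
      {z ∈ (Set.Icc s t).toFinset | ¬Even (rho z)} := by ext; simp
  rw [hE, hO] at hbal
  simp [hbal]

theorem sum_Ioo_neg_one_pow (HB : BalancedIntervalsIn (Set.univ : Set γ)) {s t : γ}
    (hst : s < t) :
    ∑ z ∈ (Set.Ioo s t).toFinset, (-1 : R) ^ rho z = -(-1) ^ rho s - (-1) ^ rho t := by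
  have h := sum_Icc_neg_one_pow (R := R) HB hst
  simp only [← Set.Ico_insert_right hst.le, ← Set.Ioo_insert_left hst, Set.toFinset_insert] at h
  rw [Finset.sum_insert (by simp [hst.ne']), Finset.sum_insert (by simp)] at h
  linear_combination h

theorem eulerAbove_eq [OrderBot γ] (HB : BalancedIntervalsIn (Set.univ : Set γ))
    {C : Finset γ} {x t : γ} (hx : x ∈ C) (hmax : ∀ y ∈ C, y ≤ x) (hxt : x < t) :
    eulerAbove R t C = -(-1) ^ rho x - (-1) ^ rho t := by
  rw [eulerAbove, ← sum_Ioo_neg_one_pow HB hxt]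
  refine Finset.sum_congr ?_ fun _ _ => rfl
  ext z
  simp only [Finset.mem_filter, Set.mem_toFinset, Set.mem_Ioo]
  exact ⟨fun ⟨_, h⟩ => ⟨h x hx, ‹_ ∧ z < t›.2⟩, fun ⟨hxz, hzt⟩ =>
    ⟨⟨bot_le.trans_lt hxz, hzt⟩, fun y hy => (hmax y hy).trans_lt hxz⟩⟩

theorem ncard_Ioo_eq_two (HB : BalancedIntervalsIn (Set.univ : Set γ)) {x t : γ} (hxt : x < t)
    (hr : rho t = rho x + 2) : (Set.Ioo x t).ncard = 2 := by
  have h := sum_Ioo_neg_one_pow (R := ℤ) HB hxt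
  have hmid : ∀ z ∈ (Set.Ioo x t).toFinset, (-1 : ℤ) ^ rho z = -(-1) ^ rho x := fun z hz => by
    obtain ⟨hxz, hzt⟩ := Set.mem_toFinset.1 hz
    have := rho_strictMono hxz
    have := rho_strictMono hzt
    rw [show rho z = rho x + 1 by omega, pow_succ, mul_neg_one]
  rw [Finset.sum_congr rfl hmid, Finset.sum_const, nsmul_eq_mul, hr, pow_add] at h
  have hcard : (((Set.Ioo x t).toFinset.card : ℤ) - 2) * (-1) ^ rho x = 0 := by
    linear_combination -h
  rw [Set.ncard_eq_toFinset_card']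
  have := (mul_eq_zero.1 hcard).resolve_right (pow_ne_zero _ (by norm_num))
  omega

theorem setOf_covBy_eq_Ioo (HB : BalancedIntervalsIn (Set.univ : Set γ)) {x t : γ}
    (htop : ∀ z, z ≤ t) (hr : rho t = rho x + 2) : {z | x ⋖ z} = Set.Ioo x t := by
  have hxt : x < t := (htop x).lt_of_ne (by rintro rfl; omega)
  ext z
  refine ⟨fun hxz => ⟨hxz.lt, (htop z).lt_of_ne ?_⟩, fun ⟨hxz, hzt⟩ => ⟨hxz, fun w hxw hwz => ?_⟩⟩
  · rintro rfl
    have := ncard_Ioo_eq_two HB hxt hr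
    rw [hxz.Ioo_eq, Set.ncard_empty] at this
    omega
  · have := rho_strictMono hxw
    have := rho_strictMono hwz
    have := rho_strictMono hzt
    omega

end Euler

section FlagRecursions

variable {K : Type} [Field K] {γ : Type} [PartialOrder γ] [OrderBot γ] {C : Finset γ} {z : γ}
  {m : ℕ}

theorem rho_image_le_of_mem_chainsIn_Iio [Finite γ] (hC : C ∈ chainsIn (Set.Iio z) ⊥) :
    ∀ i ∈ rho '' (C : Set γ), i ≤ rho z - 1 := by
  rintro _ ⟨y, hy, rfl⟩
  have := rho_strictMono (hC.1 hy)
  omega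

theorem one_le_rho_of_mem_chainsIn_Iio [Finite γ] (hC : C ∈ chainsIn (Set.Iio z) ⊥) :
    1 ≤ rho z := by
  have := rho_strictMono (bot_lt_of_mem_chainsIn_Iio hC)
  rw [rho_bot] at this
  omega

theorem uWord_rho_singleton_bot [Finite γ] :
    uWord K m (rho '' (({⊥} : Finset γ) : Set γ)) = la K ^ m := by
  rw [Finset.coe_singleton, Set.image_singleton, rho_bot,
    uWord_of_forall_le (k := 0) (by simp) m.zero_le, uWord_zero, one_mul, Nat.sub_zero]

theorem uWord_rho_insert [Finite γ] (hC : C ∈ chainsIn (Set.Iio z) ⊥) (hzm : rho z ≤ m) :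
    uWord K m (rho '' ((insert z C : Finset γ) : Set γ)) =
      uWord K (rho z - 1) (rho '' (C : Set γ)) * (lb K * la K ^ (m - rho z)) := by
  have hz := one_le_rho_of_mem_chainsIn_Iio hC
  rw [Finset.coe_insert, Set.image_insert_eq]
  have := uWord_insert_of_forall_le (K := K) (m := m) (rho_image_le_of_mem_chainsIn_Iio hC)
    (by omega)
  rwa [Nat.sub_add_cancel hz] at this

theorem uWord_rho_of_mem_chainsIn_Iio [Finite γ] (hC : C ∈ chainsIn (Set.Iio z) ⊥)
    (hzm : rho z ≤ m + 1) :
    uWord K m (rho '' (C : Set γ)) =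
      uWord K (rho z - 1) (rho '' (C : Set γ)) * la K ^ (m + 1 - rho z) := by
  have hz := one_le_rho_of_mem_chainsIn_Iio hC
  rw [uWord_of_forall_le (rho_image_le_of_mem_chainsIn_Iio hC) (by omega)]
  congr 2
  omega

variable [Fintype γ]

theorem upsSet_eq_sum (S : Set γ) (m : ℕ) :
    upsSet K S ⊥ m = ∑ C ∈ (chainsIn S ⊥).toFinset, uWord K m (rho '' (C : Set γ)) := by
  simp [upsSet, rho_bot, finsum_mem_eq_toFinset_sum]

theorem upsSet_Iio {t : γ} (ht : ⊥ < t) (hm : rho t = m + 1) :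
    upsSet K (Set.Iio t) ⊥ m = la K ^ m + ∑ z ∈ (Set.Ioo ⊥ t).toFinset,
      upsSet K (Set.Iio z) ⊥ (rho z - 1) * (lb K * la K ^ (m - rho z)) := by
  simp only [upsSet_eq_sum, Finset.sum_mul]
  rw [sum_chainsIn_Iio _ ht, uWord_rho_singleton_bot]
  refine congrArg _ (Finset.sum_congr rfl fun z hz => Finset.sum_congr rfl fun C hC => ?_)
  have := rho_strictMono (Set.mem_toFinset.1 hz).2
  exact uWord_rho_insert (Set.mem_toFinset.1 hC) (by omega)

theorem upsSet_Iio_of_covBy {q t : γ} (hq : ⊥ < q) (hqt : q ⋖ t) :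
    upsSet K (Set.Iio t) ⊥ (rho q) =
      upsSet K (Set.Iio t \ {q}) ⊥ (rho q) + upsSet K (Set.Iio q) ⊥ (rho q - 1) * lb K := by
  simp only [upsSet_eq_sum, Finset.sum_mul]
  rw [sum_chainsIn_Iio_of_covBy _ hq hqt]
  refine congrArg _ (Finset.sum_congr rfl fun C hC => ?_)
  rw [uWord_rho_insert (Set.mem_toFinset.1 hC) le_rfl, Nat.sub_self, pow_zero, mul_one]

theorem sum_eulerAbove_smul_uWord_comm {t : γ} (hm : rho t = m + 1) :
    ∑ C ∈ (chainsIn (Set.Iio t) ⊥).toFinset, eulerAbove K t C • uWord K m (rho '' (C : Set γ)) =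
      ∑ z ∈ (Set.Ioo ⊥ t).toFinset,
        (-1 : K) ^ rho z • (upsSet K (Set.Iio z) ⊥ (rho z - 1) * la K ^ (m + 1 - rho z)) := by
  unfold eulerAbove
  rw [sum_chainsIn_Iio_smul_comm]
  refine Finset.sum_congr rfl fun z hz => ?_
  have := rho_strictMono (Set.mem_toFinset.1 hz).2
  rw [upsSet_eq_sum, Finset.sum_mul]
  exact congrArg _ (Finset.sum_congr rfl fun C hC =>
    uWord_rho_of_mem_chainsIn_Iio (Set.mem_toFinset.1 hC) (by omega))

theorem sum_eulerAbove_smul_uWord_of_balanced (HB : BalancedIntervalsIn (Set.univ : Set γ))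
    {t : γ} (ht : ⊥ < t) (hm : rho t = m + 1) :
    ∑ C ∈ (chainsIn (Set.Iio t) ⊥).toFinset, eulerAbove K t C • uWord K m (rho '' (C : Set γ)) =
      (-1 - (-1) ^ (m + 1) : K) • la K ^ m + ∑ z ∈ (Set.Ioo ⊥ t).toFinset,
        (-(-1) ^ rho z - (-1) ^ (m + 1) : K) •
          (upsSet K (Set.Iio z) ⊥ (rho z - 1) * (lb K * la K ^ (m - rho z))) := by
  rw [sum_chainsIn_Iio (fun C => eulerAbove K t C • uWord K m (rho '' (C : Set γ))) ht,
    eulerAbove_eq HB (Finset.mem_singleton_self ⊥) (fun y hy => (Finset.mem_singleton.1 hy).le) ht,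
    rho_bot, pow_zero, hm, uWord_rho_singleton_bot]
  congr 1
  refine Finset.sum_congr rfl fun x hx => ?_
  have hxt := (Set.mem_toFinset.1 hx).2
  have := rho_strictMono hxt
  rw [upsSet_eq_sum, Finset.sum_mul, Finset.smul_sum]
  refine Finset.sum_congr rfl fun C hC => ?_
  have hC := Set.mem_toFinset.1 hC
  rw [← hm, eulerAbove_eq HB (Finset.mem_insert_self x C) (fun y hy => ?_) hxt,
    uWord_rho_insert hC (by omega)]
  exact (Finset.mem_insert.1 hy).elim le_of_eq fun hy => (hC.1 hy).le

theorem neg_one_pow_smul_upsSet_Iio (HB : BalancedIntervalsIn (Set.univ : Set γ)) {t : γ}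
    (ht : ⊥ < t) (hm : rho t = m + 1) :
    (-1 : K) ^ m • upsSet K (Set.Iio t) ⊥ m = la K ^ m + ∑ z ∈ (Set.Ioo ⊥ t).toFinset,
      (-1 : K) ^ rho z • (upsSet K (Set.Iio z) ⊥ (rho z - 1) * (lc K * la K ^ (m - rho z))) := by
  have hc : ∀ z ∈ (Set.Ioo ⊥ t).toFinset,
      upsSet K (Set.Iio z) ⊥ (rho z - 1) * (lc K * la K ^ (m - rho z)) =
        upsSet K (Set.Iio z) ⊥ (rho z - 1) * la K ^ (m + 1 - rho z) +
          upsSet K (Set.Iio z) ⊥ (rho z - 1) * (lb K * la K ^ (m - rho z)) := fun z hz => by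
    have := rho_strictMono (Set.mem_toFinset.1 hz).2
    rw [lc, add_mul, mul_add, ← pow_succ', show m - rho z + 1 = m + 1 - rho z by omega]
  rw [Finset.sum_congr rfl fun z hz => by rw [hc z hz, smul_add], Finset.sum_add_distrib,
    ← sum_eulerAbove_smul_uWord_comm hm, sum_eulerAbove_smul_uWord_of_balanced HB ht hm,
    add_assoc, ← Finset.sum_add_distrib, upsSet_Iio ht hm, smul_add, Finset.smul_sum, ← add_assoc]
  congr 1
  · module
  · exact Finset.sum_congr rfl fun z _ => by module

end FlagRecursions

section CdIndex

variable {K : Type} [Field K]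

theorem toAB_la : toAB K (la K) = la K - lb K := by
  simp [toAB, la, FreeAlgebra.lift_ι_apply]

theorem toAB_lb : toAB K (lb K) = lb K := by
  simp [toAB, lb, FreeAlgebra.lift_ι_apply]

theorem toAB_lc : toAB K (lc K) = la K := by
  rw [lc, map_add, toAB_la, toAB_lb, sub_add_cancel]

theorem psiS_empty {γ : Type} [PartialOrder γ] (b : γ) (m : ℕ) : psiS K ∅ b m = 0 := by
  have : chainsIn (∅ : Set γ) b = ∅ :=
    Set.eq_empty_of_forall_notMem fun C hC => Set.notMem_empty b (hC.1 hC.2.2)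
  simp [psiS, upsSet, this]

variable {γ : Type} [PartialOrder γ] [OrderBot γ] [Fintype γ]

theorem psiS_Iio_of_covBy {q t : γ} (hq : ⊥ < q) (hqt : q ⋖ t) :
    psiS K (Set.Iio t) ⊥ (rho q) =
      psiS K (Set.Iio t \ {q}) ⊥ (rho q) + psiS K (Set.Iio q) ⊥ (rho q - 1) * lb K := by
  unfold psiS
  rw [upsSet_Iio_of_covBy hq hqt, map_add, map_mul, toAB_lb]

theorem two_smul_psiS_Iio (HB : BalancedIntervalsIn (Set.univ : Set γ)) {t : γ} (ht : ⊥ < t)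
    {m : ℕ} (hm : rho t = m + 1) :
    (2 : K) • psiS K (Set.Iio t) ⊥ m = ((1 : K) + (-1) ^ m) • (la K - lb K) ^ m +
      ∑ z ∈ (Set.Ioo ⊥ t).toFinset, psiS K (Set.Iio z) ⊥ (rho z - 1) *
        ((lb K + (-1 : K) ^ (m - rho z) • la K) * (la K - lb K) ^ (m - rho z)) := by
  have hpsi : ∀ (S : Set γ) (k : ℕ), toAB K (upsSet K S ⊥ k) = psiS K S ⊥ k := fun _ _ => rfl
  have h1 := congrArg (toAB K) (upsSet_Iio (K := K) ht hm)
  have h2 := congrArg (toAB K) (neg_one_pow_smul_upsSet_Iio (K := K) HB ht hm)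
  simp only [map_add, map_sum, map_mul, map_pow, map_smul, toAB_la, toAB_lb, toAB_lc, hpsi]
    at h1 h2
  have h3 : psiS K (Set.Iio t) ⊥ m = (-1 : K) ^ m • (la K - lb K) ^ m +
      ∑ z ∈ (Set.Ioo ⊥ t).toFinset, (-1 : K) ^ (m - rho z) •
        (psiS K (Set.Iio z) ⊥ (rho z - 1) * (la K * (la K - lb K) ^ (m - rho z))) := by
    calc psiS K (Set.Iio t) ⊥ m = (-1 : K) ^ m • ((-1 : K) ^ m • psiS K (Set.Iio t) ⊥ m) := by
          rw [smul_smul, ← mul_pow, neg_one_mul, neg_neg, one_pow, one_smul]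
      _ = _ := by
          rw [h2, smul_add, Finset.smul_sum]
          congr 1
          refine Finset.sum_congr rfl fun z hz => ?_
          have := rho_strictMono (Set.mem_toFinset.1 hz).2
          rw [smul_smul, ← pow_add, show m + rho z = m - rho z + 2 * rho z by omega, pow_add,
            pow_mul, neg_one_sq, one_pow, mul_one]
  rw [two_smul]
  nth_rewrite 1 [h1]
  rw [h3, add_add_add_comm, add_smul, one_smul, ← Finset.sum_add_distrib]
  congr 1
  refine Finset.sum_congr rfl fun z _ => ?_
  rw [add_mul, mul_add, smul_mul_assoc, mul_smul_comm]

theorem psiS_Iio_mem_cdSub [NeZero (2 : K)] (HB : BalancedIntervalsIn (Set.univ : Set γ))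
    (t : γ) : psiS K (Set.Iio t) ⊥ (rho t - 1) ∈ cdSub K := by
  induction t using WellFoundedLT.induction with
  | _ t ih =>
  rcases eq_bot_or_bot_lt t with rfl | ht
  · rw [Set.Iio_bot, psiS_empty]
    exact zero_mem _
  obtain ⟨m, hm⟩ : ∃ m, rho t = m + 1 :=
    ⟨rho t - 1, by have := rho_strictMono ht; rw [rho_bot] at this; omega⟩
  rw [hm, Nat.add_sub_cancel, ← inv_smul_smul₀ (two_ne_zero (α := K)) (psiS K _ ⊥ m),
    two_smul_psiS_Iio HB ht hm]
  refine Subalgebra.smul_mem _ (add_mem (one_add_neg_one_pow_smul_mem_cdSub K m)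
    (sum_mem fun z hz => mul_mem (ih z (Set.mem_toFinset.1 hz).2) ?_)) _
  exact add_neg_one_pow_smul_mul_mem_cdSub K _

end CdIndex

section Embedding

variable {K : Type} [Field K] {γ δ : Type} [PartialOrder γ] [PartialOrder δ] (j : γ ↪o δ)

theorem image_Iic_of_isLowerSet_range (hj : IsLowerSet (Set.range j)) (x : γ) :
    j '' Set.Iic x = Set.Iic (j x) := by
  ext y
  refine ⟨fun ⟨a, ha, hay⟩ => hay ▸ j.monotone ha, fun hy => ?_⟩
  obtain ⟨a, rfl⟩ := hj hy ⟨x, rfl⟩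
  exact ⟨a, j.le_iff_le.1 hy, rfl⟩

theorem rho_apply_of_isLowerSet_range (hj : IsLowerSet (Set.range j)) (x : γ) :
    rho (j x) = rho x := by
  unfold rho
  congr 1
  ext k
  constructor
  · rintro ⟨s, hs, hsx, hcard⟩
    rw [← image_Iic_of_isLowerSet_range j hj] at hsx
    obtain ⟨s, hs'x, rfl⟩ := Finset.subset_set_image_iff.1 hsx
    rw [Finset.coe_image, IsChain.image_embedding_iff] at hs
    exact ⟨s, hs, hs'x, Finset.card_image_of_injective _ j.injective ▸ hcard⟩
  · rintro ⟨s, hs, hsx, hcard⟩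
    refine ⟨s.image j, ?_, ?_, Finset.card_image_of_injective _ j.injective ▸ hcard⟩ <;>
      rw [Finset.coe_image]
    · exact IsChain.image_embedding_iff.2 hs
    · exact image_Iic_of_isLowerSet_range j hj x ▸ Set.image_mono hsx

theorem psiS_image (hj : IsLowerSet (Set.range j)) (S : Set γ) (b : γ) (m : ℕ) :
    psiS K (j '' S) (j b) m = psiS K S b m := by
  unfold psiS upsSet
  congr 1
  symm
  refine finsum_mem_eq_of_bijOn (fun C => C.image j) ⟨?_, ?_, ?_⟩ fun C _ => ?_
  · rintro C ⟨hCS, hC, hb⟩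
    refine ⟨?_, ?_, Finset.mem_image_of_mem j hb⟩ <;> rw [Finset.coe_image]
    · exact Set.image_mono hCS
    · exact IsChain.image_embedding_iff.2 hC
  · exact fun C _ C' _ h => Finset.image_injective j.injective h
  · rintro C' ⟨hC'S, hC', hb⟩
    obtain ⟨C, hCS, rfl⟩ := Finset.subset_set_image_iff.1 hC'S
    rw [Finset.coe_image, IsChain.image_embedding_iff] at hC'
    obtain ⟨a, ha, hab⟩ := Finset.mem_image.1 hb
    exact ⟨C, ⟨hCS, hC', j.injective hab ▸ ha⟩, rfl⟩
  · simp only [Finset.coe_image, Set.image_image, rho_apply_of_isLowerSet_range j hj]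

end Embedding

namespace Semisusp

variable {α β : Type} [PartialOrder α] [OrderBot α] [PartialOrder β] {S : Set α}

def extend (j : α ↪o β) (q : β) (hS : ∀ a, j a ≤ q ↔ a = ⊥ ∨ ∃ s ∈ S, a ≤ s)
    (hq : ∀ a, ¬q ≤ j a) : Semisusp α S ↪o β :=
  OrderEmbedding.ofMapLEIff (fun w => w.toOpt.elim q j) fun
    | ⟨none⟩, ⟨none⟩ => iff_of_true le_rfl trivial
    | ⟨none⟩, ⟨some b⟩ => iff_of_false (hq b) id
    | ⟨some a⟩, ⟨none⟩ => hS a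
    | ⟨some _⟩, ⟨some _⟩ => j.le_iff_le

variable {j : α ↪o β} {q : β} {hS : ∀ a, j a ≤ q ↔ a = ⊥ ∨ ∃ s ∈ S, a ≤ s}
  {hq : ∀ a, ¬q ≤ j a}

theorem range_extend : Set.range (extend j q hS hq) = insert q (Set.range j) := by
  ext w
  simp only [Set.mem_range, Set.mem_insert_iff]
  constructor
  · rintro ⟨⟨_ | a⟩, rfl⟩
    exacts [Or.inl rfl, Or.inr ⟨a, rfl⟩]
  · rintro (rfl | ⟨a, rfl⟩)
    exacts [⟨⟨none⟩, rfl⟩, ⟨⟨some a⟩, rfl⟩]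

theorem extend_bot : extend j q hS hq ⊥ = j ⊥ := rfl

end Semisusp

section Deletion

variable {K : Type} [Field K] {α Q : Type} [PartialOrder α] [PartialOrder Q]

structure IsCoatomDeletion (j : α ↪o Q) (q t : Q) : Prop where
  covBy : q ⋖ t
  le_top : ∀ z, z ≤ t
  range_eq : Set.range j = {q, t}ᶜ

namespace IsCoatomDeletion

variable {j : α ↪o Q} {q t : Q}

theorem range_eq_compl_Ici (hd : IsCoatomDeletion j q t) : Set.range j = (Set.Ici q)ᶜ := by
  rw [hd.range_eq]
  ext x
  simp only [Set.mem_compl_iff, Set.mem_insert_iff, Set.mem_singleton_iff, Set.mem_Ici, not_or]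
  refine ⟨fun ⟨hxq, hxt⟩ hqx => ?_, fun h => ⟨?_, ?_⟩⟩
  · exact (hd.covBy.eq_or_eq hqx (hd.le_top x)).elim (hxq ·) (hxt ·)
  · rintro rfl
    exact h le_rfl
  · rintro rfl
    exact h hd.covBy.le

theorem not_le_apply (hd : IsCoatomDeletion j q t) (a : α) : ¬q ≤ j a :=
  hd.range_eq_compl_Ici.subset ⟨a, rfl⟩

theorem isLowerSet_range (hd : IsCoatomDeletion j q t) : IsLowerSet (Set.range j) :=
  hd.range_eq_compl_Ici ▸ (isUpperSet_Ici q).compl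

theorem bot_lt [OrderBot α] [OrderBot Q] (hd : IsCoatomDeletion j q t) : ⊥ < q :=
  bot_lt_iff_ne_bot.2 fun h => hd.not_le_apply ⊥ (h ▸ bot_le)

theorem map_bot [OrderBot α] [OrderBot Q] (hd : IsCoatomDeletion j q t) : j ⊥ = ⊥ := by
  obtain ⟨a, ha⟩ : ⊥ ∈ Set.range j := hd.range_eq_compl_Ici ▸ hd.bot_lt.not_ge
  exact le_bot_iff.1 (ha ▸ j.monotone bot_le)

theorem ncard_covBy_eq_one_iff [Finite Q] (hd : IsCoatomDeletion j q t)
    (HB : BalancedIntervalsIn (Set.univ : Set Q)) {x : α} (hx : rho t = rho (j x) + 2) :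
    {z | x ⋖ z}.ncard = 1 ↔ j x < q := by
  have := Fintype.ofFinite Q
  -- By the diamond property `j x` has two covers in `Q`; `q` is one of them iff `j x < q`.
  have hcov := setOf_covBy_eq_Ioo HB hd.le_top hx
  have himage : j '' {z | x ⋖ z} = Set.Ioo (j x) t \ {q} := by
    ext w
    rw [← hcov]
    constructor
    · rintro ⟨z, hz, rfl⟩
      exact ⟨(hd.isLowerSet_range.ordConnected.apply_covBy_apply_iff j).2 hz,
        fun h => hd.not_le_apply z h.ge⟩
    · rintro ⟨hw, hwq⟩
      have hwt : w < t := (hcov.subset hw).2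
      obtain ⟨z, rfl⟩ : w ∈ Set.range j := by
        rw [hd.range_eq]
        simpa [not_or] using ⟨fun h => hwq h, hwt.ne⟩
      exact ⟨z, (hd.isLowerSet_range.ordConnected.apply_covBy_apply_iff j).1 hw, rfl⟩
  have hxt : j x < t := (hd.le_top _).lt_of_ne (by rintro h; rw [h] at hx; omega)
  rw [← Set.ncard_image_of_injective _ j.injective, himage]
  by_cases hxq : j x < q
  · rw [Set.ncard_sdiff_singleton_of_mem (Set.mem_Ioo.2 ⟨hxq, hd.covBy.lt⟩),
      ncard_Ioo_eq_two HB hxt hx]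
    simp [hxq]
  · rw [Set.sdiff_singleton_eq_self fun h => hxq h.1, ncard_Ioo_eq_two HB hxt hx]
    simp [hxq]

theorem boundary_eq [OrderBot α] [OrderBot Q] [Finite Q] (hd : IsCoatomDeletion j q t) {n : ℕ}
    (hgr : IsGradedOfRank Q (n + 1)) (HB : BalancedIntervalsIn (Set.univ : Set Q))
    (hrq : rho q = n) : boundary α n = j ⁻¹' Set.Iio q := by
  have hn : 1 ≤ n := by
    have := rho_strictMono hd.bot_lt
    rw [rho_bot] at this
    omega
  have hrho := rho_apply_of_isLowerSet_range j hd.isLowerSet_range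
  have hcount : ∀ x : α, rho x = n - 1 → ({z | x ⋖ z}.ncard = 1 ↔ j x < q) := fun x hx =>
    hd.ncard_covBy_eq_one_iff HB (by rw [hrho, hx, hgr.rho_of_forall_le hd.le_top]; omega)
  ext y
  simp only [boundary, boundaryIn, Set.mem_univ, true_and, Set.mem_ofPred_eq, Set.mem_preimage,
    Set.mem_Iio]
  refine ⟨fun ⟨x, hx, h1, hyx⟩ => (j.monotone hyx).trans_lt ((hcount x hx).1 h1), fun hy => ?_⟩
  obtain ⟨w, hyw, hwq⟩ := exists_le_covBy_of_lt hy
  obtain ⟨x, rfl⟩ : w ∈ Set.range j := hd.range_eq_compl_Ici ▸ hwq.lt.not_ge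
  have hx : rho x = n - 1 := by
    have := hgr.rho_of_covBy hwq
    rw [hrho] at this
    omega
  exact ⟨x, hx, (hcount x hx).2 hwq.lt, j.le_iff_le.1 hyw⟩

theorem psiS_univ [OrderBot α] [OrderBot Q] (hd : IsCoatomDeletion j q t) (m : ℕ) :
    psiS K (Set.univ : Set α) ⊥ m = psiS K (Set.Iio t \ {q}) ⊥ m := by
  rw [← psiS_image j hd.isLowerSet_range, Set.image_univ, hd.range_eq, hd.map_bot]
  congr 1
  ext z
  simp [lt_iff_le_and_ne, hd.le_top z, and_comm]

theorem psiS_preimage_Iio [OrderBot α] [OrderBot Q] (hd : IsCoatomDeletion j q t) (m : ℕ) :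
    psiS K (j ⁻¹' Set.Iio q) ⊥ m = psiS K (Set.Iio q) ⊥ m := by
  rw [← psiS_image j hd.isLowerSet_range, hd.map_bot, Set.image_preimage_eq_of_subset]
  exact fun z hz => hd.range_eq_compl_Ici ▸ (Set.mem_Iio.1 hz).not_ge

theorem psiS_semisusp [OrderBot α] [OrderBot Q] (hd : IsCoatomDeletion j q t) {S : Set α}
    (hS : S = j ⁻¹' Set.Iio q) (m : ℕ) :
    psiS K (Set.univ : Set (Semisusp α S)) ⊥ m = psiS K (Set.Iio t) ⊥ m := by
  subst hS
  have hext : ∀ a, j a ≤ q ↔ a = ⊥ ∨ ∃ s ∈ j ⁻¹' Set.Iio q, a ≤ s := fun a => by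
    refine ⟨fun h => Or.inr ⟨a, h.lt_of_ne fun h' => hd.not_le_apply a h'.ge, le_rfl⟩, ?_⟩
    rintro (rfl | ⟨s, hs, has⟩)
    · exact hd.map_bot ▸ bot_le
    · exact (j.monotone has).trans hs.le
  have hrange : Set.range (Semisusp.extend j q hext hd.not_le_apply) = Set.Iio t := by
    rw [Semisusp.range_extend, hd.range_eq]
    ext z
    by_cases hzq : z = q <;> simp [hzq, lt_iff_le_and_ne, hd.le_top, hd.covBy.ne]
  rw [← psiS_image _ (hrange ▸ isLowerSet_Iio t), Set.image_univ, hrange, Semisusp.extend_bot,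
    hd.map_bot]

end IsCoatomDeletion

end Deletion

/-- the local `cd`-index.  Let `P` be a near-Eulerian poset of rank
`n`.  Then `Ψ_P = ℓ^Ψ_P + Ψ_{∂P}·a` where `ℓ^Ψ_P := Ψ_{Σ̃P} - Ψ_{∂P}·(a+b)`; moreover
`ℓ^Ψ_P` (as well as `Ψ_{Σ̃P}` and `Ψ_{∂P}`, i.e. `Φ_{Σ̃P}` and `Φ_{∂P}`) lies in the
subalgebra `K⟨c,d⟩`, so that as an element of `K⟨c,d⟩` it equals `Φ_{Σ̃P} - Φ_{∂P}·c`. -/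
theorem localCdIndex
    (K : Type) [Field K] [CharZero K]
    (α : Type) [PartialOrder α] [Finite α] [OrderBot α] (n : ℕ)
    (h : IsNearEulerianOfRank α n) :
    psiS K (Set.univ : Set α) ⊥ n =
      (psiS K (Set.univ : Set (Semisusp α (boundary α n))) ⊥ n
          - psiS K (boundary α n) ⊥ (n - 1) * lc K)
        + psiS K (boundary α n) ⊥ (n - 1) * la K ∧
    (psiS K (Set.univ : Set (Semisusp α (boundary α n))) ⊥ n
        - psiS K (boundary α n) ⊥ (n - 1) * lc K) ∈ cdSub K ∧
    psiS K (Set.univ : Set (Semisusp α (boundary α n))) ⊥ n ∈ cdSub K ∧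
    psiS K (boundary α n) ⊥ (n - 1) ∈ cdSub K := by
  obtain ⟨Q, _, _, q, t, ⟨⟨b, hb⟩, -, hgr, HB⟩, htop, hrq, hqt, ⟨e⟩⟩ := h
  let _ : OrderBot Q := { bot := b, bot_le := hb }
  have := Fintype.ofFinite Q
  have hrt : rho t = n + 1 := hgr.rho_of_forall_le htop
  have hcov : q ⋖ t := ⟨(htop q).lt_of_ne hqt, fun z hqz hzt => by
    have := rho_strictMono hqz
    have := rho_strictMono hzt
    omega⟩
  let j : α ↪o Q := e.toOrderEmbedding.trans (OrderEmbedding.subtype _)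
  have hd : IsCoatomDeletion j q t := ⟨hcov, htop, by
    ext x
    simp [j, e.surjective.range_comp]⟩
  have hB := hd.boundary_eq hgr HB hrq
  have hcdt : psiS K (Set.Iio t) ⊥ (rho q) ∈ cdSub K := by
    simpa [hrt, hrq] using psiS_Iio_mem_cdSub (K := K) HB t
  have hcdq := psiS_Iio_mem_cdSub (K := K) HB q
  rw [hd.psiS_univ, hd.psiS_semisusp hB, hB, hd.psiS_preimage_Iio, ← hrq]
  refine ⟨?_, sub_mem hcdt (mul_mem hcdq (lc_mem_cdSub K)), hcdt, hcdq⟩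
  rw [psiS_Iio_of_covBy hd.bot_lt hcov, lc]
  noncomm_ring

end CDIndex
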